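/- arXiv:2308.09930 — 2 statements merged into one kernel-verified Lean document; each statement's English description precedes it below -/
import Mathlib

section
/- Let T be the bilateral shift operator on L^2 of the unit circle (multiplication by e^{iθ}). For complex numbers z0, z1, z2, the 2×2 operator matrix [[z0, z1·T + z2],[z1·T* + z2, z0]] is invertible if and only if z0² − z1² − z2² − 2·z1·z2·x ≠ 0 for every real x with −1 ≤ x ≤ 1. -/
/-!
The shift `T` is unitary, so `B = z1 T + z2` and `C = z1 T* + z2` commute and
`B C = (z1² + z2²) + z1 z2 (T + T*)`. A block operator `[[z0, B], [C, z0]]` with commuting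
entries is invertible once its determinant `z0² - B C` is (the adjugate divided by it is the
inverse), and `T + T*` is self-adjoint of norm at most `2`, so its spectrum lies in `[-2, 2]`.

Conversely, every `ω` on the unit circle is an approximate eigenvalue of the bilateral shift
(truncations of `∑ ω⁻ⁿ eₙ`), and the same vectors are approximate eigenvectors of `T*` for `ω̄`.
If `z0² = (z1 ω + z2) (z1 ω̄ + z2)`, a kernel vector `(p, q)` of the scalar symbol turns them into
approximate kernel vectors `(p v, q v)` of the block operator, which is then not invertible.
For `x = Re ω` this determinant condition is the equation of the statement.
-/

open ContinuousLinearMap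

/-- `ℓ²(ℤ)`, a concrete model of `L²(𝕋)` in which the bilateral shift
(multiplication by `e^{iθ}`) acts by shifting coordinates. -/
noncomputable abbrev HT : Type := lp (fun _ : ℤ => ℂ) 2

open scoped ComplexConjugate

section BlockOperator

variable {𝕜 E : Type*} [NontriviallyNormedField 𝕜] [NormedAddCommGroup E] [NormedSpace 𝕜 E]

def blockOp (a b c d : E →L[𝕜] E) : E × E →L[𝕜] E × E := (a.coprod b).prod (c.coprod d)

@[simp]
lemma blockOp_apply (a b c d : E →L[𝕜] E) (x : E × E) :
    blockOp a b c d x = (a x.1 + b x.2, c x.1 + d x.2) := rfl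

lemma blockOp_mul (a b c d a' b' c' d' : E →L[𝕜] E) :
    blockOp a b c d * blockOp a' b' c' d' =
      blockOp (a * a' + b * c') (a * b' + b * d') (c * a' + d * c') (c * b' + d * d') := by
  refine ContinuousLinearMap.ext fun x => Prod.ext ?_ ?_ <;>
    simp only [mul_apply_eq_comp, blockOp_apply, map_add, add_apply] <;> abel

lemma blockOp_one : blockOp (1 : E →L[𝕜] E) 0 0 1 = 1 := by
  ext <;> simp

lemma isUnit_blockOp_of_isUnit_sq_smul_one_sub_mul {z : 𝕜} {B C : E →L[𝕜] E} (hBC : Commute B C)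
    (h : IsUnit (z ^ 2 • 1 - B * C)) : IsUnit (blockOp (z • 1) B C (z • 1)) := by
  set D := z ^ 2 • (1 : E →L[𝕜] E) - B * C
  set F := (↑h.unit⁻¹ : E →L[𝕜] E)
  -- the adjugate `[[z, -B], [-C, z]]` multiplies the block operator to `diag(D, D)` on both sides
  set adj := blockOp (z • 1) (-B) (-C) (z • (1 : E →L[𝕜] E))
  have hDF : blockOp D 0 0 D * blockOp F 0 0 F = 1 := by
    simp [blockOp_mul, F, blockOp_one]
  have hFD : blockOp F 0 0 F * blockOp D 0 0 D = 1 := by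
    simp [blockOp_mul, F, blockOp_one]
  have hright : blockOp (z • 1) B C (z • 1) * adj = blockOp D 0 0 D := by
    simp only [adj, D, blockOp_mul]
    congr 1 <;> simp only [smul_mul_assoc, mul_smul_comm, one_mul, mul_one, smul_smul, sq,
      mul_neg, neg_add_cancel, add_neg_cancel, hBC.eq] <;> abel
  have hleft : adj * blockOp (z • 1) B C (z • 1) = blockOp D 0 0 D := by
    simp only [adj, D, blockOp_mul]
    congr 1 <;> simp only [smul_mul_assoc, mul_smul_comm, one_mul, mul_one, smul_smul, sq,
      neg_mul, smul_neg, neg_add_cancel, add_neg_cancel, hBC.eq] <;> abel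
  refine isUnit_iff_exists_and_exists.mpr ⟨⟨adj * blockOp F 0 0 F, ?_⟩, ⟨blockOp F 0 0 F * adj, ?_⟩⟩
  · rw [← mul_assoc, hright, hDF]
  · rw [mul_assoc, hleft, hFD]

lemma not_isUnit_of_forall_exists_norm_apply_le {X : E →L[𝕜] E}
    (h : ∀ ε > 0, ∃ v ≠ 0, ‖X v‖ ≤ ε * ‖v‖) : ¬IsUnit X := by
  rintro ⟨Y, rfl⟩
  set K := ‖(↑Y⁻¹ : E →L[𝕜] E)‖
  obtain ⟨v, hv, hYv⟩ := h (K + 1)⁻¹ (by positivity)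
  have hinv : ‖v‖ ≤ K * ‖(Y : E →L[𝕜] E) v‖ := by
    simpa [← mul_apply_eq_comp] using le_opNorm (↑Y⁻¹ : E →L[𝕜] E) ((Y : E →L[𝕜] E) v)
  have hK : K * (K + 1)⁻¹ < 1 := by
    rw [mul_inv_lt_iff₀ (by positivity)]; linarith
  refine lt_irrefl ‖v‖ ?_
  calc ‖v‖ ≤ K * ‖(Y : E →L[𝕜] E) v‖ := hinv
    _ ≤ K * ((K + 1)⁻¹ * ‖v‖) := by gcongr
    _ = K * (K + 1)⁻¹ * ‖v‖ := (mul_assoc _ _ _).symm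
    _ < ‖v‖ := mul_lt_of_lt_one_left (norm_pos_iff.mpr hv) hK

lemma not_isUnit_blockOp_of_approx_eigenvector {z β γ : 𝕜} {B C : E →L[𝕜] E}
    (hdet : z ^ 2 = β * γ)
    (happrox : ∀ ε > 0, ∃ v ≠ 0, ‖B v - β • v‖ ≤ ε * ‖v‖ ∧ ‖C v - γ • v‖ ≤ ε * ‖v‖) :
    ¬IsUnit (blockOp (z • 1) B C (z • 1)) := by
  obtain ⟨pq, hpq, hker⟩ := Matrix.exists_mulVec_eq_zero_iff.mpr
    (show !![z, β; γ, z].det = 0 by rw [Matrix.det_fin_two_of]; linear_combination hdet)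
  have hker₁ : z * pq 0 + β * pq 1 = 0 := by
    simpa [Matrix.vecHead, Matrix.vecTail] using congrFun hker 0
  have hker₂ : γ * pq 0 + z * pq 1 = 0 := by
    simpa [Matrix.vecHead, Matrix.vecTail] using congrFun hker 1
  refine not_isUnit_of_forall_exists_norm_apply_le fun ε hε => ?_
  obtain ⟨v, hv, hB, hC⟩ := happrox ε hε
  refine ⟨(pq 0 • v, pq 1 • v), ?_, ?_⟩
  · contrapose! hpq
    simp only [Prod.mk_eq_zero, smul_eq_zero, hv, or_false] at hpq
    ext i; fin_cases i <;> simp [hpq]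
  · have happly : blockOp (z • 1) B C (z • 1) (pq 0 • v, pq 1 • v) =
        (pq 1 • (B v - β • v), pq 0 • (C v - γ • v)) := by
      simp only [blockOp_apply, smul_apply, one_apply_eq_self, map_smul]
      ext
      · linear_combination (norm := module) hker₁ • v
      · linear_combination (norm := module) hker₂ • v
    rw [happly, Prod.norm_def, Prod.norm_def, norm_smul, norm_smul, norm_smul, norm_smul,
      ← max_mul_of_nonneg _ _ (norm_nonneg v), mul_left_comm]
    refine max_le ?_ ?_
    · calc ‖pq 1‖ * ‖B v - β • v‖ ≤ ‖pq 1‖ * (ε * ‖v‖) := by gcongr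
        _ ≤ max ‖pq 0‖ ‖pq 1‖ * (ε * ‖v‖) := by gcongr; exact le_max_right _ _
    · calc ‖pq 0‖ * ‖C v - γ • v‖ ≤ ‖pq 0‖ * (ε * ‖v‖) := by gcongr
        _ ≤ max ‖pq 0‖ ‖pq 1‖ * (ε * ‖v‖) := by gcongr; exact le_max_left _ _

end BlockOperator

section Unitary

variable {A : Type*} [CStarAlgebra A] {u : A}

lemma commute_smul_add_smul_one_star (hu : u ∈ unitary A) (z1 z2 : ℂ) :
    Commute (z1 • u + z2 • 1) (z1 • star u + z2 • 1) := by
  have h : Commute u (star u) :=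
    (Unitary.mul_star_self_of_mem hu).trans (Unitary.star_mul_self_of_mem hu).symm
  refine .add_right (.smul_right ?_ z1) (.smul_right (.one_right _) z2)
  exact (h.smul_left z1).add_left ((Commute.one_left _).smul_left z2)

lemma smul_add_smul_one_mul_star (hu : u ∈ unitary A) (z1 z2 : ℂ) :
    (z1 • u + z2 • 1) * (z1 • star u + z2 • 1) =
      (z1 ^ 2 + z2 ^ 2) • 1 + (z1 * z2) • (u + star u) := by
  simp only [mul_add, add_mul, smul_mul_smul, Unitary.mul_star_self_of_mem hu, mul_one, one_mul]
  module

lemma spectrum_add_star_subset_Icc (hu : u ∈ unitary A) :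
    spectrum ℂ (u + star u) ⊆ Complex.ofReal '' Set.Icc (-2) 2 := by
  nontriviality A
  intro μ hμ
  have hsa : IsSelfAdjoint (u + star u) := by
    rw [IsSelfAdjoint, star_add, star_star, add_comm]
  have hnorm : ‖μ‖ ≤ 2 := calc
    ‖μ‖ ≤ ‖u + star u‖ := spectrum.norm_le_norm_of_mem hμ
    _ ≤ ‖u‖ + ‖star u‖ := norm_add_le _ _
    _ = 2 := by rw [norm_star, CStarRing.norm_of_mem_unitary hu]; norm_num
  refine ⟨μ.re, abs_le.mp ((Complex.abs_re_le_norm μ).trans hnorm), ?_⟩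
  exact (hsa.mem_spectrum_eq_re hμ).symm

lemma isUnit_sq_smul_one_sub_mul (hu : u ∈ unitary A) {z0 z1 z2 : ℂ}
    (h : ∀ x : ℝ, -1 ≤ x → x ≤ 1 → z0 ^ 2 - z1 ^ 2 - z2 ^ 2 - 2 * z1 * z2 * (x : ℂ) ≠ 0) :
    IsUnit (z0 ^ 2 • 1 - (z1 • u + z2 • 1) * (z1 • star u + z2 • 1)) := by
  nontriviality A
  by_contra hnot
  have hmem : z0 ^ 2 - z1 ^ 2 - z2 ^ 2 ∈ spectrum ℂ ((z1 * z2) • (u + star u)) := by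
    rw [spectrum.mem_iff, Algebra.algebraMap_eq_smul_one]
    convert hnot using 2
    rw [smul_add_smul_one_mul_star hu]
    module
  rw [spectrum.smul_eq_smul _ _ (spectrum.nonempty _)] at hmem
  obtain ⟨_, hμ, hx⟩ := Set.mem_smul_set.mp hmem
  obtain ⟨x, ⟨hx1, hx2⟩, rfl⟩ := spectrum_add_star_subset_Icc hu hμ
  refine h (x / 2) (by linarith) (by linarith) ?_
  rw [← hx, smul_eq_mul]
  push_cast
  ring

end Unitary

section HilbertSpace

variable {E : Type*} [NormedAddCommGroup E] [InnerProductSpace ℂ E] [CompleteSpace E]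

lemma norm_star_apply_sub_conj_smul {u : E →L[ℂ] E} (hu : u ∈ unitary (E →L[ℂ] E)) {ω : ℂ}
    (hω : ‖ω‖ = 1) (v : E) : ‖star u v - conj ω • v‖ = ‖u v - ω • v‖ := by
  have hωω : conj ω * ω = 1 := by rw [Complex.conj_mul', hω]; norm_num
  have hu' : u (star u v) = v := by
    rw [← mul_apply_eq_comp, Unitary.mul_star_self_of_mem hu, one_apply_eq_self]
  calc ‖star u v - conj ω • v‖ = ‖u (star u v - conj ω • v)‖ := (norm_map_of_mem_unitary hu _).symm
    _ = ‖conj ω • (ω • v - u v)‖ := by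
      rw [map_sub, map_smul, hu']
      congr 1
      linear_combination (norm := module) -hωω • v
    _ = ‖u v - ω • v‖ := by rw [norm_smul, Complex.norm_conj, hω, one_mul, norm_sub_rev]

lemma not_isUnit_blockOp_of_approx_eigenvalue {u : E →L[ℂ] E} (hu : u ∈ unitary (E →L[ℂ] E))
    {ω : ℂ} (hω : ‖ω‖ = 1) (happrox : ∀ ε > 0, ∃ v ≠ 0, ‖u v - ω • v‖ ≤ ε * ‖v‖)
    {z0 z1 z2 : ℂ} (hdet : z0 ^ 2 = (z1 * ω + z2) * (z1 * conj ω + z2)) :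
    ¬IsUnit (blockOp (z0 • 1) (z1 • u + z2 • 1) (z1 • star u + z2 • 1) (z0 • 1)) := by
  refine not_isUnit_blockOp_of_approx_eigenvector hdet fun ε hε => ?_
  obtain ⟨v, hv, huv⟩ := happrox (ε / (‖z1‖ + 1)) (by positivity)
  have hscale : ∀ w : E, ‖w‖ ≤ ε / (‖z1‖ + 1) * ‖v‖ → ‖z1 • w‖ ≤ ε * ‖v‖ := fun w hw => by
    have : ‖z1‖ / (‖z1‖ + 1) ≤ 1 := (div_le_one (by positivity)).mpr (by linarith)
    calc ‖z1 • w‖ ≤ ‖z1‖ * (ε / (‖z1‖ + 1) * ‖v‖) := by rw [norm_smul]; gcongr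
      _ = ‖z1‖ / (‖z1‖ + 1) * (ε * ‖v‖) := by ring
      _ ≤ ε * ‖v‖ := mul_le_of_le_one_left (by positivity) this
  refine ⟨v, hv, ?_, ?_⟩
  · convert hscale _ huv using 2
    simp only [add_apply, smul_apply, one_apply_eq_self]
    module
  · convert hscale _ ((norm_star_apply_sub_conj_smul hu hω v).trans_le huv) using 2
    simp only [add_apply, smul_apply, one_apply_eq_self]
    module

end HilbertSpace

section Shift

variable {T : HT →L[ℂ] HT} (hT : ∀ (f : HT) (n : ℤ), T f n = f (n - 1))
include hT

lemma shift_single (n : ℤ) (a : ℂ) : T (lp.single 2 n a) = lp.single 2 (n + 1) a := by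
  ext m
  rw [hT]
  by_cases h : m = n + 1
  · simp [h]
  · rw [lp.single_apply_ne _ _ _ h, lp.single_apply_ne]
    omega

lemma adjoint_shift_single (n : ℤ) (a : ℂ) : adjoint T (lp.single 2 n a) = lp.single 2 (n - 1) a :=
  ext_inner_right ℂ fun g => by
    rw [adjoint_inner_left, lp.inner_single_left, lp.inner_single_left, hT]

lemma shift_mem_unitary : T ∈ unitary (HT →L[ℂ] HT) := by
  rw [Unitary.mem_iff, star_eq_adjoint]
  constructor <;>
  · refine lp.ext_continuousLinearMap (by norm_num) fun n => ContinuousLinearMap.ext fun a => ?_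
    simp [shift_single hT, adjoint_shift_single hT]

lemma shift_exists_approx_eigenvector {ω : ℂ} (hω : ‖ω‖ = 1) {ε : ℝ} (hε : 0 < ε) :
    ∃ v ≠ 0, ‖T v - ω • v‖ ≤ ε * ‖v‖ := by
  have hω0 : ω ≠ 0 := norm_ne_zero_iff.mp (by rw [hω]; exact one_ne_zero)
  set e : ℤ → HT := fun m => lp.single 2 m (ω ^ (-m))
  have he : ∀ m, ‖e m‖ = 1 := fun m => by
    rw [lp.norm_single (by norm_num), norm_zpow, hω, one_zpow]
  have hTe : ∀ m, T (e m) = ω • e (m + 1) := fun m => by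
    rw [shift_single hT, ← lp.single_smul, smul_eq_mul, neg_add, zpow_add₀ hω0, zpow_neg_one,
      mul_comm (ω ^ (-m)), ← mul_assoc, mul_inv_cancel₀ hω0, one_mul]
  obtain ⟨N, hN⟩ := exists_nat_gt ((2 / ε) ^ 2)
  set v := ∑ n ∈ Finset.range N, e n
  have hres : T v - ω • v = ω • e N - ω • e 0 := by
    simp only [v, map_sum, hTe, Finset.smul_sum, ← Finset.sum_sub_distrib]
    exact_mod_cast Finset.sum_range_sub (fun n : ℕ => ω • e n) N
  have hres_le : ‖T v - ω • v‖ ≤ 2 := by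
    rw [hres]
    calc ‖ω • e N - ω • e 0‖ ≤ ‖ω • e N‖ + ‖ω • e 0‖ := norm_sub_le _ _
      _ = 2 := by rw [norm_smul, norm_smul, he, he, hω]; norm_num
  have hv : ‖v‖ ^ 2 = N := by
    have := lp.norm_sum_single (p := 2) (by norm_num) (fun m : ℤ => ω ^ (-m))
      ((Finset.range N).map Nat.castEmbedding)
    simp only [Finset.sum_map, Nat.castEmbedding_apply, norm_zpow, hω, one_zpow,
      Real.one_rpow, Finset.sum_const, nsmul_eq_mul, mul_one] at this
    simpa [v, e] using this
  have hv_gt : 2 / ε < ‖v‖ := lt_of_pow_lt_pow_left₀ 2 (norm_nonneg v) (hv ▸ hN)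
  refine ⟨v, norm_pos_iff.mp ((div_pos two_pos hε).trans hv_gt), ?_⟩
  calc ‖T v - ω • v‖ ≤ 2 := hres_le
    _ ≤ ε * ‖v‖ := by rw [div_lt_iff₀' hε] at hv_gt; exact hv_gt.le

end Shift

/-- The 2×2 operator matrix `[[z0, z1 T + z2],[z1 T* + z2, z0]]` on `H ⊕ H` is invertible
iff `z0² − z1² − z2² − 2 z1 z2 x ≠ 0` for every `x ∈ [−1, 1]`, where `T` is the bilateral
shift. -/
theorem stmt_0 (T : HT →L[ℂ] HT) (hT : ∀ (f : HT) (n : ℤ), T f n = f (n - 1))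
    (z0 z1 z2 : ℂ) :
    IsUnit
      ((((z0 • (1 : HT →L[ℂ] HT)).coprod (z1 • T + z2 • (1 : HT →L[ℂ] HT))).prod
          ((z1 • (adjoint T) + z2 • (1 : HT →L[ℂ] HT)).coprod
            (z0 • (1 : HT →L[ℂ] HT))) : HT × HT →L[ℂ] HT × HT)) ↔
      ∀ x : ℝ, -1 ≤ x → x ≤ 1 → z0 ^ 2 - z1 ^ 2 - z2 ^ 2 - 2 * z1 * z2 * (x : ℂ) ≠ 0 := by
  have hU := shift_mem_unitary hT
  rw [← star_eq_adjoint]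
  change IsUnit (blockOp _ _ _ _) ↔ _
  constructor
  · intro hA x hx1 hx2 hdet
    set ω := Complex.exp (Real.arccos x * Complex.I)
    have hω : ‖ω‖ = 1 := Complex.norm_exp_ofReal_mul_I _
    have hre : ω.re = x := by rw [Complex.exp_ofReal_mul_I_re, Real.cos_arccos hx1 hx2]
    have hmul : ω * conj ω = 1 := by rw [Complex.mul_conj', hω]; norm_num
    have hadd : ω + conj ω = 2 * x := by rw [Complex.add_conj, hre]; norm_cast
    refine not_isUnit_blockOp_of_approx_eigenvalue hU hω
      (fun ε hε => shift_exists_approx_eigenvector hT hω hε) ?_ hA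
    linear_combination hdet - z1 ^ 2 * hmul - z1 * z2 * hadd
  · exact fun h => isUnit_blockOp_of_isUnit_sq_smul_one_sub_mul
      (commute_smul_add_smul_one_star hU z1 z2) (isUnit_sq_smul_one_sub_mul hU h)
end

section
/- (1/2π) ∫₀^{2π} (16+8cosθ)(4096cos²θ + 10624cosθ + 6841) / ((79+64cosθ)²(71+64cosθ)²) dθ = 14872/(45045√105) − 7896/(45045√2145). -/
/-!
By partial fractions the integrand is a combination of `(a + b cos θ)⁻¹` and `(a + b cos θ)⁻²`
with `(a, b) = (79, 64), (71, 64)`. For `|b| < a`, `∫₀^{2π} (a + b cos θ)⁻¹ = 2π / √(a² - b²)`: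
after rescaling, `(a + b cos θ)⁻¹` is the Poisson kernel `(1 - r²) / (1 - 2 r cos θ + r²)`, which has
the global primitive `θ + 2 arctan (r sin θ / (1 - r cos θ))`. The squared term reduces to the first
one through `d/dθ [b sin θ / (a + b cos θ)] = a (a + b cos θ)⁻¹ - (a² - b²) (a + b cos θ)⁻²`,
whose left side integrates to zero over a period.
-/

open Real

theorem add_mul_cos_pos {a b : ℝ} (hab : |b| < a) (t : ℝ) : 0 < a + b * cos t := by
  have hbc : |b * cos t| ≤ |b| := by
    rw [abs_mul]; exact mul_le_of_le_one_right (abs_nonneg b) (abs_cos_le_one t)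
  linarith [neg_abs_le (b * cos t)]

theorem continuous_inv_add_mul_cos {a b : ℝ} (hab : |b| < a) :
    Continuous fun t => (a + b * cos t)⁻¹ :=
  (continuous_const.add (continuous_const.mul continuous_cos)).inv₀
    fun t => (add_mul_cos_pos hab t).ne'

theorem one_sub_two_mul_cos_add_sq_pos {r : ℝ} (hr : |r| < 1) (t : ℝ) :
    0 < 1 - 2 * r * cos t + r ^ 2 := by
  have h2r : |-2 * r| < 1 + r ^ 2 := by
    rw [abs_mul, abs_neg, abs_two, ← sq_abs r]
    nlinarith [abs_nonneg r]
  linarith [add_mul_cos_pos h2r t]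

/-- Unlike the Weierstrass substitution `tan (t / 2)`, this primitive of the Poisson kernel is
smooth on all of `ℝ`, so the fundamental theorem of calculus applies on `[0, 2π]` directly. -/
noncomputable def poissonPrimitive (r t : ℝ) : ℝ :=
  t + 2 * arctan (r * sin t / (1 - r * cos t))

theorem hasDerivAt_poissonPrimitive {r : ℝ} (hr : |r| < 1) (t : ℝ) :
    HasDerivAt (poissonPrimitive r) ((1 - r ^ 2) / (1 - 2 * r * cos t + r ^ 2)) t := by
  have hpos : 0 < 1 - r * cos t := by
    simpa [sub_eq_add_neg] using add_mul_cos_pos (a := 1) (b := -r) (by rwa [abs_neg]) t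
  have hquot := ((hasDerivAt_sin t).const_mul r).div
    (((hasDerivAt_cos t).const_mul r).const_sub 1) hpos.ne'
  refine ((hasDerivAt_id t).add (hquot.arctan.const_mul 2)).congr_deriv ?_
  have hden := (one_sub_two_mul_cos_add_sq_pos hr t).ne'
  rw [Pi.div_apply]
  field_simp
  linear_combination (2 * r ^ 3 * cos t - 2 * r ^ 2) * sin_sq_add_cos_sq t

theorem integral_poisson_kernel {r : ℝ} (hr : |r| < 1) :
    ∫ t in (0:ℝ)..(2 * π), (1 - r ^ 2) / (1 - 2 * r * cos t + r ^ 2) = 2 * π := by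
  have hcont : Continuous fun t => (1 - r ^ 2) / (1 - 2 * r * cos t + r ^ 2) :=
    continuous_const.div (by fun_prop) fun t => (one_sub_two_mul_cos_add_sq_pos hr t).ne'
  rw [intervalIntegral.integral_eq_sub_of_hasDerivAt (fun t _ => hasDerivAt_poissonPrimitive hr t)
    (hcont.intervalIntegrable _ _)]
  simp [poissonPrimitive]

theorem integral_inv_add_mul_cos {a b : ℝ} (hab : |b| < a) :
    ∫ t in (0:ℝ)..(2 * π), (a + b * cos t)⁻¹ = 2 * π / √(a ^ 2 - b ^ 2) := by
  set s := √(a ^ 2 - b ^ 2)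
  have hb2 : b ^ 2 < a ^ 2 := sq_lt_sq' (abs_lt.mp hab).1 (abs_lt.mp hab).2
  have hs : 0 < s := Real.sqrt_pos.mpr (by linarith)
  have hs2 : s ^ 2 = a ^ 2 - b ^ 2 := Real.sq_sqrt (by linarith)
  have ha : 0 < a := (abs_nonneg b).trans_lt hab
  -- `r` is the root in `(-1, 1)` of `b r² + 2 a r + b = 0`, which makes `a + b cos t`
  -- proportional to the denominator `1 - 2 r cos t + r²` of the Poisson kernel.
  set r := -b / (a + s)
  have hr : |r| < 1 := by
    rw [abs_div, abs_neg, abs_of_pos (add_pos ha hs), div_lt_one (by linarith)]; linarith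
  have hscale : ∀ t, s * (1 - 2 * r * cos t + r ^ 2) = (1 - r ^ 2) * (a + b * cos t) := by
    intro t
    have : a + s ≠ 0 := by positivity
    simp only [r]
    field_simp
    linear_combination (s + a + b * cos t) * hs2
  clear_value r s
  have hkernel : ∀ t, (a + b * cos t)⁻¹ = s⁻¹ * ((1 - r ^ 2) / (1 - 2 * r * cos t + r ^ 2)) := by
    intro t
    have hr2 : 1 - r ^ 2 ≠ 0 := by nlinarith [sq_abs r, abs_nonneg r]
    rw [inv_mul_eq_div, div_div, mul_comm _ s, hscale t, div_mul_cancel_left₀ hr2]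
  simp_rw [hkernel, intervalIntegral.integral_const_mul, integral_poisson_kernel hr]
  field_simp

theorem hasDerivAt_mul_sin_div_add_mul_cos {a b : ℝ} (hab : |b| < a) (t : ℝ) :
    HasDerivAt (fun t => b * sin t / (a + b * cos t))
      (a * (a + b * cos t)⁻¹ - (a ^ 2 - b ^ 2) * (a + b * cos t)⁻¹ ^ 2) t := by
  have hpos := (add_mul_cos_pos hab t).ne'
  refine (((hasDerivAt_sin t).const_mul b).div
    (((hasDerivAt_cos t).const_mul b).const_add a) hpos).congr_deriv ?_
  field_simp
  linear_combination b ^ 2 * sin_sq_add_cos_sq t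

theorem integral_inv_add_mul_cos_sq {a b : ℝ} (hab : |b| < a) :
    ∫ t in (0:ℝ)..(2 * π), (a + b * cos t)⁻¹ ^ 2 = 2 * π * a / √(a ^ 2 - b ^ 2) ^ 3 := by
  have hcont := continuous_inv_add_mul_cos hab
  have hcont2 : Continuous fun t => (a + b * cos t)⁻¹ ^ 2 := hcont.pow 2
  have hb2 : b ^ 2 < a ^ 2 := sq_lt_sq' (abs_lt.mp hab).1 (abs_lt.mp hab).2
  have hs : 0 < √(a ^ 2 - b ^ 2) := Real.sqrt_pos.mpr (by linarith)
  have hs2 : √(a ^ 2 - b ^ 2) ^ 2 = a ^ 2 - b ^ 2 := Real.sq_sqrt (by linarith)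
  have hboundary := intervalIntegral.integral_eq_sub_of_hasDerivAt
    (fun t _ => hasDerivAt_mul_sin_div_add_mul_cos hab t)
    (((hcont.const_mul a).sub (hcont2.const_mul _)).intervalIntegrable 0 (2 * π))
  rw [intervalIntegral.integral_sub ((hcont.const_mul a).intervalIntegrable _ _)
    ((hcont2.const_mul _).intervalIntegrable _ _), intervalIntegral.integral_const_mul,
    intervalIntegral.integral_const_mul, integral_inv_add_mul_cos hab] at hboundary
  simp only [sin_two_pi, sin_zero, mul_zero, zero_div, sub_zero] at hboundary
  generalize √(a ^ 2 - b ^ 2) = s at hs hs2 hboundary ⊢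
  generalize ∫ t in (0:ℝ)..(2 * π), (a + b * cos t)⁻¹ ^ 2 = I at hboundary ⊢
  rw [← hs2] at hboundary
  field_simp at hboundary ⊢
  linear_combination -hboundary

theorem partial_fractions_79_71 {c : ℝ} (h79 : 79 + 64 * c ≠ 0) (h71 : 71 + 64 * c ≠ 0) :
    (16 + 8 * c) * (4096 * c ^ 2 + 10624 * c + 6841) / ((79 + 64 * c) ^ 2 * (71 + 64 * c) ^ 2) =
      -1 / 16 * (79 + 64 * c)⁻¹ + -49 / 16 * (79 + 64 * c)⁻¹ ^ 2
        + 3 / 16 * (71 + 64 * c)⁻¹ + 171 / 16 * (71 + 64 * c)⁻¹ ^ 2 := by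
  rw [mul_comm 64 c] at h79 h71 ⊢
  field_simp
  ring

theorem stmt_13 :
    (1 / (2 * π)) * ∫ θ in (0:ℝ)..(2 * π),
        (16 + 8 * Real.cos θ) * (4096 * Real.cos θ ^ 2 + 10624 * Real.cos θ + 6841) /
          ((79 + 64 * Real.cos θ) ^ 2 * (71 + 64 * Real.cos θ) ^ 2)
      = 14872 / (45045 * Real.sqrt 105) - 7896 / (45045 * Real.sqrt 2145) := by
  have h79 : |(64:ℝ)| < 79 := by norm_num
  have h71 : |(64:ℝ)| < 71 := by norm_num
  have hA := continuous_inv_add_mul_cos h79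
  have hB := continuous_inv_add_mul_cos h71
  have hint : ∀ f : ℝ → ℝ, Continuous f → IntervalIntegrable f MeasureTheory.volume 0 (2 * π) :=
    fun f hf => hf.intervalIntegrable _ _
  simp_rw [partial_fractions_79_71 (add_mul_cos_pos h79 _).ne' (add_mul_cos_pos h71 _).ne']
  rw [intervalIntegral.integral_add (hint _ (by fun_prop)) (hint _ (by fun_prop)),
    intervalIntegral.integral_add (hint _ (by fun_prop)) (hint _ (by fun_prop)),
    intervalIntegral.integral_add (hint _ (by fun_prop)) (hint _ (by fun_prop))]
  simp only [intervalIntegral.integral_const_mul, integral_inv_add_mul_cos h79,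
    integral_inv_add_mul_cos h71, integral_inv_add_mul_cos_sq h79, integral_inv_add_mul_cos_sq h71]
  have hsqrt945 : √(71 ^ 2 - 64 ^ 2 : ℝ) = 3 * √105 := by
    rw [show (71 ^ 2 - 64 ^ 2 : ℝ) = 3 ^ 2 * 105 by norm_num, Real.sqrt_mul (by norm_num),
      Real.sqrt_sq (by norm_num)]
  have hsqrt2145 : √(79 ^ 2 - 64 ^ 2 : ℝ) = √2145 := by norm_num
  rw [hsqrt945, hsqrt2145]
  have hsq105 := Real.sq_sqrt (show (0:ℝ) ≤ 105 by norm_num)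
  have hsq2145 := Real.sq_sqrt (show (0:ℝ) ≤ 2145 by norm_num)
  field_simp
  simp only [pow_succ _ 2, hsq105, hsq2145]
  ring
end
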